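/- Let (z_t) be a nonnegative sequence with increments bounded as |z_{j+1} − z_j| ≤ βC z_j + βD for β, C, D > 0, and suppose βCτ ≤ 1/4 for an integer τ ≥ 1, and that z_j ≤ 2 z_{t−τ} + 2βτD for all t−τ ≤ j ≤ t−1. Then |z_t − z_{t−τ}| ≤ 2βτC z_{t−τ} + 2βτD (assuming β²τ²C + βτ ≤ 2βτ). -/
import Mathlib

theorem stmt_6 (β C D : ℝ) (hβ : 0 < β) (hC : 0 < C) (hD : 0 < D)
    (τ : ℕ) (hτ : 1 ≤ τ) (hβCτ : β * C * τ ≤ 1 / 4)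
    (z : ℕ → ℝ) (hz : ∀ t, 0 ≤ z t)
    (hinc : ∀ j, |z (j + 1) - z j| ≤ β * C * z j + β * D)
    (t : ℕ) (ht : τ ≤ t)
    (hwin : ∀ j, t - τ ≤ j → j ≤ t - 1 → z j ≤ 2 * z (t - τ) + 2 * β * (τ : ℝ) * D)
    (habs : β ^ 2 * (τ : ℝ) ^ 2 * C + β * (τ : ℝ) ≤ 2 * β * (τ : ℝ)) :
    |z t - z (t - τ)| ≤ 2 * β * (τ : ℝ) * C * z (t - τ) + 2 * β * (τ : ℝ) * D := by
  set s := t - τ with hs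
  have hts : t = s + τ := by omega
  have key : z t - z s = ∑ i ∈ Finset.range τ, (z (s + i + 1) - z (s + i)) := by
    have := Finset.sum_range_sub (fun i => z (s + i)) τ
    rw [hts]
    simpa [add_assoc] using this.symm
  have hbound : ∀ i ∈ Finset.range τ,
      |z (s + i + 1) - z (s + i)| ≤ β * C * (2 * z s + 2 * β * (τ : ℝ) * D) + β * D := by
    intro i hi
    simp only [Finset.mem_range] at hi
    have h1 := hinc (s + i)
    have h2 : z (s + i) ≤ 2 * z s + 2 * β * (τ : ℝ) * D := by
      apply hwin (s + i) (by omega) (by omega)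
    nlinarith [mul_pos hβ hC]
  calc |z t - z s| ≤ ∑ i ∈ Finset.range τ, |z (s + i + 1) - z (s + i)| := by
        rw [key]; exact Finset.abs_sum_le_sum_abs _ _
    _ ≤ ∑ i ∈ Finset.range τ, (β * C * (2 * z s + 2 * β * (τ : ℝ) * D) + β * D) :=
        Finset.sum_le_sum hbound
    _ = (τ : ℝ) * (β * C * (2 * z s + 2 * β * (τ : ℝ) * D) + β * D) := by
        simp [Finset.sum_const, mul_comm]
        ring
    _ ≤ 2 * β * (τ : ℝ) * C * z s + 2 * β * (τ : ℝ) * D := by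
        nlinarith [hz s, mul_nonneg (mul_nonneg hβ.le hC.le) (hz s),
          mul_le_mul_of_nonneg_right habs hD.le]
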